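/- For any Boolean functions f, g : B^M → B, the set of Boolean functions constructed on the yin-yang superpositioner with feed-in functions (f, g) is exactly {f, f ∧ g, f ∧ ¬g, const 0, g, f ⊕ g, ¬f ∧ g} (pointwise operations). -/
import Mathlib


def F1 : Bool × Bool → Bool × Bool := fun b => (b.1 && b.2, b.2)

def F2 : Bool × Bool → Bool × Bool := fun b => (b.1, xor b.1 b.2)

def comp : List (Fin 2) → (Bool × Bool → Bool × Bool) :=
  fun S => S.foldr (fun j h => (if j = 0 then F1 else F2) ∘ h) id

/-- Intrinsic functions of the yin-yang superpositioner. -/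
def intrinsic : Set (Bool × Bool → Bool) :=
  {φ | ∃ S : List (Fin 2), φ = (fun b => (comp S b).1) ∨ φ = (fun b => (comp S b).2)}

def Plist : List (Bool × Bool → Bool × Bool) :=
  [id,
   fun b => (b.1 && b.2, b.2),
   fun b => (b.1, xor b.1 b.2),
   fun b => (b.1 && b.2, !b.1 && b.2),
   fun b => (b.1 && !b.2, xor b.1 b.2),
   fun b => (false, !b.1 && b.2),
   fun b => (b.1 && !b.2, !b.1 && b.2)]

lemma comp_mem (S : List (Fin 2)) : comp S ∈ Plist := by
  induction S with
  | nil => simp [comp, Plist]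
  | cons j S ih =>
    simp only [Plist, List.mem_cons, List.not_mem_nil, or_false] at ih ⊢
    obtain hj | hj : j = 0 ∨ j = 1 := by omega
    · subst hj
      have h : comp (0 :: S) = F1 ∘ comp S := rfl
      rcases ih with hp | hp | hp | hp | hp | hp | hp <;> rw [h, hp] <;> decide
    · subst hj
      have h : comp (1 :: S) = F2 ∘ comp S := rfl
      rcases ih with hp | hp | hp | hp | hp | hp | hp <;> rw [h, hp] <;> decide

/-- For any `f, g : B^M → B`, the functions constructed on the yin-yang
superpositioner with feed-ins `(f,g)` are exactly
`{f, f ∧ g, f ∧ ¬g, 0, g, f ⊕ g, ¬f ∧ g}` (pointwise). -/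
theorem stmt_13 (M : ℕ) (f g : (Fin M → Bool) → Bool) :
    {h : (Fin M → Bool) → Bool |
        ∃ φ ∈ intrinsic, h = fun x => φ (f x, g x)} =
      ({fun x => f x, fun x => f x && g x, fun x => f x && !(g x), fun _ => false,
        fun x => g x, fun x => xor (f x) (g x), fun x => !(f x) && g x} :
        Set ((Fin M → Bool) → Bool)) := by
  ext h
  constructor
  · rintro ⟨φ, ⟨S, hS | hS⟩, rfl⟩ <;>
    · have hm := comp_mem S
      simp only [Plist, List.mem_cons, List.not_mem_nil, or_false] at hm
      subst hS
      rcases hm with hp | hp | hp | hp | hp | hp | hp <;> rw [hp] <;>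
        simp only [Set.mem_insert_iff, Set.mem_singleton_iff] <;>
        tauto
  · intro hh
    simp only [Set.mem_insert_iff, Set.mem_singleton_iff] at hh
    rcases hh with rfl | rfl | rfl | rfl | rfl | rfl | rfl
    · exact ⟨fun b => b.1, ⟨[], Or.inl rfl⟩, rfl⟩
    · exact ⟨fun b => (comp [0] b).1, ⟨[0], Or.inl rfl⟩, rfl⟩
    · refine ⟨fun b => (comp [0,1] b).1, ⟨[0,1], Or.inl rfl⟩, ?_⟩
      funext x
      show (f x && !(g x)) = (comp [0,1] (f x, g x)).1
      cases f x <;> cases g x <;> rfl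
    · refine ⟨fun b => (comp [0,1,0] b).1, ⟨[0,1,0], Or.inl rfl⟩, ?_⟩
      funext x
      show false = (comp [0,1,0] (f x, g x)).1
      cases f x <;> cases g x <;> rfl
    · exact ⟨fun b => b.2, ⟨[], Or.inr rfl⟩, rfl⟩
    · exact ⟨fun b => (comp [1] b).2, ⟨[1], Or.inr rfl⟩, rfl⟩
    · refine ⟨fun b => (comp [1,0] b).2, ⟨[1,0], Or.inr rfl⟩, ?_⟩
      funext x
      show (!(f x) && g x) = (comp [1,0] (f x, g x)).2
      cases f x <;> cases g x <;> rfl
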